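/- Let c > 0 and let μ ∈ S₁ satisfy F_c(μ) = μ, with probability generating function R(x) = Σ_{i=1}^∞ μ({i}) x^i. Then R(0) = 0, R(1) = 1, R'(x) > 0 for all x ∈ [0,1], and R(x) = R(x)² + (x(1-x)/(2c)) R''(x) for all x ∈ [0,1). -/

import Mathlib

/-!
Comparing the fixed-point equation at `k` and at `k + 1` lineages (a Kingman chain observed with
`k` lineages either started there or came down from `k + 1`) gives the coefficient recurrence
`(k(k-1)/2 + c) μₖ = c (μ∗μ)ₖ + (k+1)k/2 · μₖ₊₁`. Multiplied by `xᵏ` and summed over `k`, it is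
the differential equation, because `∑ k(k-1) μₖ xᵏ = x² R''`, `∑ (k+1)k μₖ₊₁ xᵏ = x R''` and
`∑ (μ∗μ)ₖ xᵏ = R²`. Every chain reaches a single lineage before the exponential clock rings with
positive probability, so `μ₁ > 0` and `R' ≥ μ₁` on `[0, 1)`; at `x = 1` the difference quotients
of `R` converge to the finite mean by dominated convergence.
-/

open Filter Topology Set

noncomputable section

/-- Convolution of two (sub)probability mass functions on `ℕ∞ = ℕ⁺ ∪ {∞} ∪ {0}`,
with the convention `∞ + anything = ∞`. -/
def conv (μ ν : ℕ∞ → ℝ) : ℕ∞ → ℝ :=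
  fun k => ∑' p : ℕ∞ × ℕ∞, if p.1 + p.2 = k then μ p.1 * ν p.2 else 0

/-- The factor `(l(l-1)/2) / (l(l-1)/2 + c)`, the probability that the coalescence
from `l` to `l-1` lineages happens before an independent `Exp(c)` time. -/
def kingmanFactor (c : ℝ) (l : ℕ) : ℝ :=
  ((l : ℝ) * ((l : ℝ) - 1) / 2) / ((l : ℝ) * ((l : ℝ) - 1) / 2 + c)

/-- `pK c j i` : the probability that Kingman's coalescent started from `j` lineages
has exactly `i` lineages at an independent exponential time with rate `c`. -/
def pK (c : ℝ) (j : ℕ∞) (i : ℕ) : ℝ :=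
  (c / ((i : ℝ) * ((i : ℝ) - 1) / 2 + c)) *
    (if j = ⊤ then ∏' l : ℕ, kingmanFactor c (i + 1 + l)
     else ∏ l ∈ Finset.Icc (i + 1) j.toNat, kingmanFactor c l)

/-- The mass that `F_c μ` puts on a finite `k ∈ ℕ⁺`. -/
def FcFin (c : ℝ) (μ : ℕ∞ → ℝ) (k : ℕ) : ℝ :=
  ∑' j : ℕ∞, if (k : ℕ∞) ≤ j then conv μ μ j * pK c j k else 0

/-- The map `F_c` on distributions on `ℕ⁺ ∪ {∞}`; the mass at `∞` is the remaining mass. -/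
def Fc (c : ℝ) (μ : ℕ∞ → ℝ) : ℕ∞ → ℝ :=
  fun k =>
    if k = ⊤ then 1 - ∑' n : ℕ, FcFin c μ n
    else if k = 0 then 0 else FcFin c μ k.toNat

/-- `μ` is a probability distribution on `ℕ⁺ ∪ {∞}` (no mass at `0`). -/
def IsDist (μ : ℕ∞ → ℝ) : Prop :=
  (∀ k, 0 ≤ μ k) ∧ μ 0 = 0 ∧ HasSum μ 1

/-- The mean of a distribution on `ℕ⁺ ∪ {∞}` (ignoring the mass at `∞`). -/
def distMean (μ : ℕ∞ → ℝ) : ℝ := ∑' n : ℕ, (n : ℝ) * μ (n : ℕ∞)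

/-- `μ` belongs to `S₁`: a probability distribution on `ℕ⁺` with finite mean. -/
def MemS1 (μ : ℕ∞ → ℝ) : Prop :=
  IsDist μ ∧ μ ⊤ = 0 ∧ Summable (fun n : ℕ => (n : ℝ) * μ (n : ℕ∞))

/-- `StDom μ ν` : `μ ⪯ ν` in the usual stochastic order, i.e.
`μ([0,x]) ≥ ν([0,x])` for all `x ∈ [0,∞]`. -/
def StDom (μ ν : ℕ∞ → ℝ) : Prop :=
  ∀ x : ℕ∞, (∑' k : ℕ∞, if k ≤ x then ν k else 0) ≤ ∑' k : ℕ∞, if k ≤ x then μ k else 0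

/-- The unit point mass at `a`. -/
def delta (a : ℕ∞) : ℕ∞ → ℝ := fun k => if k = a then 1 else 0

end

open Finset

noncomputable section

def pgf (a : ℕ → ℝ) (x : ℝ) : ℝ := ∑' k, a k * x ^ k

def coeffDeriv (a : ℕ → ℝ) (k : ℕ) : ℝ := (k + 1) * a (k + 1)

-- the total rate at which `k` lineages coalesce or are stopped by the `Exp(c)` clock
def exitRate (c : ℝ) (k : ℕ) : ℝ := k * (k - 1) / 2 + c

end

section PowerSeries

variable {a b : ℕ → ℝ} {B r x : ℝ} {m : ℕ}

theorem pgf_zero (a : ℕ → ℝ) : pgf a 0 = a 0 := by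
  rw [pgf, tsum_eq_single 0 fun k hk => by simp [hk]]
  simp

theorem pgf_one (a : ℕ → ℝ) : pgf a 1 = ∑' k, a k := by
  simp [pgf]

theorem summable_mul_pow_of_abs_le_choose (hb : ∀ k, |b k| ≤ B * (k + m).choose m)
    (hr : |r| < 1) : Summable fun k => b k * r ^ k := by
  have hgeom := summable_choose_mul_geometric_of_norm_lt_one m (r := |r|) (by simpa using hr)
  refine .of_norm_bounded (hgeom.mul_left B) fun k => ?_
  rw [norm_mul, norm_pow, Real.norm_eq_abs, Real.norm_eq_abs, ← mul_assoc]
  gcongr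
  exact hb k

theorem abs_coeffDeriv_le (ha : ∀ k, |a k| ≤ B * (k + m).choose m) (k : ℕ) :
    |coeffDeriv a k| ≤ (m + 1) * B * (k + (m + 1)).choose (m + 1) := by
  have hchoose : ((k + 1 + m).choose m : ℝ) * (k + 1)
      = (k + (m + 1)).choose (m + 1) * (m + 1) := by
    have h := Nat.choose_succ_right_eq (k + 1 + m) m
    rw [Nat.add_sub_cancel] at h
    rw [show k + (m + 1) = k + 1 + m by omega]
    exact_mod_cast h.symm
  rw [coeffDeriv, abs_mul, abs_of_nonneg (by positivity)]
  calc ((k : ℝ) + 1) * |a (k + 1)| ≤ (k + 1) * (B * (k + 1 + m).choose m) := by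
        gcongr
        exact_mod_cast ha (k + 1)
    _ = (m + 1) * B * (k + (m + 1)).choose (m + 1) := by
        linear_combination B * hchoose

theorem hasDerivAt_pgf
    (ha : ∀ r, 0 ≤ r → r < 1 → Summable fun k => |coeffDeriv a k| * r ^ k) (hx : |x| < 1) :
    HasDerivAt (pgf a) (pgf (coeffDeriv a) x) x := by
  obtain ⟨r, hxr, hr1⟩ := exists_between hx
  have hr0 : 0 < r := (abs_nonneg x).trans_lt hxr
  have hu : Summable fun k => k * |a k| * r ^ (k - 1) := by
    rw [← summable_nat_add_iff 1]
    refine (ha r hr0.le hr1).congr fun k => ?_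
    rw [coeffDeriv, abs_mul, abs_of_nonneg (by positivity)]
    push_cast
    simp
  have hderiv : ∀ k, ∀ z ∈ Metric.ball (0 : ℝ) r,
      HasDerivAt (fun w => a k * w ^ k) (a k * (k * z ^ (k - 1))) z :=
    fun k z _ => (hasDerivAt_pow k z).const_mul (a k)
  have hbound : ∀ k, ∀ z ∈ Metric.ball (0 : ℝ) r,
      ‖a k * (k * z ^ (k - 1))‖ ≤ k * |a k| * r ^ (k - 1) := by
    intro k z hz
    rw [mem_ball_zero_iff, Real.norm_eq_abs] at hz
    rw [norm_mul, norm_mul, norm_pow, Real.norm_eq_abs, Real.norm_eq_abs, Real.norm_eq_abs,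
      Nat.abs_cast]
    calc |a k| * (k * |z| ^ (k - 1)) ≤ |a k| * (k * r ^ (k - 1)) := by gcongr
      _ = k * |a k| * r ^ (k - 1) := by ring
  have hx_mem : x ∈ Metric.ball (0 : ℝ) r := mem_ball_zero_iff.2 (by rwa [Real.norm_eq_abs])
  have h := hasDerivAt_tsum_of_isPreconnected hu Metric.isOpen_ball
    (convex_ball (0 : ℝ) r).isPreconnected hderiv hbound (Metric.mem_ball_self hr0)
    (summable_of_ne_finset_zero (s := {0}) fun k hk => by simp_all) hx_mem
  have hsum : Summable fun k => a k * (k * x ^ (k - 1)) :=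
    .of_norm_bounded hu fun k => hbound k x hx_mem
  have hshift : pgf (coeffDeriv a) x = ∑' k, a k * (k * x ^ (k - 1)) := by
    rw [hsum.tsum_eq_zero_add, pgf]
    simp [coeffDeriv, mul_comm, mul_left_comm]
  rw [hshift]
  exact h

theorem hasDerivAt_pgf_of_abs_le_choose (ha : ∀ k, |a k| ≤ B * (k + m).choose m)
    (hx : |x| < 1) : HasDerivAt (pgf a) (pgf (coeffDeriv a) x) x :=
  hasDerivAt_pgf (fun r hr0 hr1 => summable_mul_pow_of_abs_le_choose
    (fun k => (abs_abs _).trans_le (abs_coeffDeriv_le ha k)) (by rwa [abs_of_nonneg hr0])) hx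

theorem deriv_deriv_pgf (ha : ∀ k, |a k| ≤ B * (k + m).choose m) (hx : |x| < 1) :
    deriv (deriv (pgf a)) x = pgf (coeffDeriv (coeffDeriv a)) x := by
  have hderiv : deriv (pgf a) =ᶠ[𝓝 x] pgf (coeffDeriv a) := by
    filter_upwards [isOpen_Ioo.mem_nhds (abs_lt.1 hx)] with y hy
    exact (hasDerivAt_pgf_of_abs_le_choose ha (abs_lt.2 hy)).deriv
  rw [hderiv.deriv_eq]
  exact (hasDerivAt_pgf_of_abs_le_choose (abs_coeffDeriv_le ha) hx).deriv

theorem hasSum_pgf (ha : ∀ k, |a k| ≤ B * (k + m).choose m) (hx : |x| < 1) :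
    HasSum (fun k => a k * x ^ k) (pgf a x) :=
  (summable_mul_pow_of_abs_le_choose ha hx).hasSum

theorem hasSum_sq_pgf (ha : ∀ k, |a k| ≤ B * (k + m).choose m) (hx : |x| < 1) :
    HasSum (fun n => (∑ p ∈ antidiagonal n, a p.1 * a p.2) * x ^ n) (pgf a x ^ 2) := by
  have hnorm : Summable fun k => ‖a k * x ^ k‖ := by
    have h := summable_mul_pow_of_abs_le_choose (b := fun k => |a k|)
      (fun k => (abs_abs _).trans_le (ha k)) (r := |x|) (by rwa [abs_abs])
    simpa [abs_mul] using h
  have hterm : ∀ n, ∑ p ∈ antidiagonal n, a p.1 * x ^ p.1 * (a p.2 * x ^ p.2)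
      = (∑ p ∈ antidiagonal n, a p.1 * a p.2) * x ^ n := by
    intro n
    rw [Finset.sum_mul]
    refine Finset.sum_congr rfl fun p hp => ?_
    rw [← mem_antidiagonal.1 hp, pow_add]
    ring
  have h := (summable_norm_sum_mul_antidiagonal_of_summable_norm hnorm hnorm).of_norm.hasSum
  rw [← tsum_mul_tsum_eq_tsum_sum_antidiagonal_of_summable_norm hnorm hnorm, ← sq] at h
  simp only [hterm] at h
  exact h

theorem pgf_eq_sq_add_deriv_deriv {c : ℝ} (hc : c ≠ 0)
    (ha : ∀ k, |a k| ≤ B * (k + m).choose m)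
    (hrec : ∀ k : ℕ, ((k : ℝ) * (k - 1) / 2 + c) * a k
      = c * ∑ p ∈ antidiagonal k, a p.1 * a p.2 + (k + 1) * k / 2 * a (k + 1))
    (hx : |x| < 1) :
    pgf a x = pgf a x ^ 2 + x * (1 - x) / (2 * c) * deriv (deriv (pgf a)) x := by
  rw [deriv_deriv_pgf ha hx]
  set D := pgf (coeffDeriv (coeffDeriv a)) x
  have hD : HasSum (fun k => coeffDeriv (coeffDeriv a) k * x ^ k) D :=
    hasSum_pgf (abs_coeffDeriv_le (abs_coeffDeriv_le ha)) hx
  have hquad : HasSum (fun k : ℕ => (k : ℝ) * (k - 1) / 2 * a k * x ^ k) (x ^ 2 / 2 * D) := by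
    refine (hasSum_nat_add_iff' 2).1 ?_
    simp only [Finset.sum_range_succ, Finset.sum_range_zero, CharP.cast_eq_zero, Nat.cast_one,
      zero_mul, sub_self, mul_zero, zero_div, add_zero, sub_zero]
    refine (hD.mul_left (x ^ 2 / 2)).congr_fun fun k => ?_
    simp only [coeffDeriv]
    push_cast
    ring
  have hlin : HasSum (fun k : ℕ => ((k : ℝ) + 1) * k / 2 * a (k + 1) * x ^ k) (x / 2 * D) := by
    refine (hasSum_nat_add_iff' 1).1 ?_
    simp only [Finset.sum_range_one, CharP.cast_eq_zero, mul_zero, zero_div, zero_mul, sub_zero]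
    refine (hD.mul_left (x / 2)).congr_fun fun k => ?_
    simp only [coeffDeriv]
    push_cast
    ring
  have hlhs := hquad.add ((hasSum_pgf ha hx).mul_left c)
  have hrhs := ((hasSum_sq_pgf ha hx).mul_left c).add hlin
  have hsame := hlhs.unique (hrhs.congr_fun fun k => by linear_combination x ^ k * hrec k)
  field_simp
  linear_combination 2 * hsame

theorem hasDerivWithinAt_pgf_one (ha : ∀ k, 0 ≤ a k) (hs : Summable a)
    (hm : Summable fun k : ℕ => (k : ℝ) * a k) :
    HasDerivWithinAt (pgf a) (∑' k : ℕ, (k : ℝ) * a k) (Icc 0 1) 1 := by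
  rw [hasDerivWithinAt_iff_tendsto_slope]
  set g : ℝ → ℕ → ℝ := fun y k => a k * ∑ i ∈ range k, y ^ i
  have hslope : ∀ y ∈ Icc (0 : ℝ) 1 \ {1}, ∑' k, g y k = slope (pgf a) 1 y := by
    rintro y ⟨⟨hy0, hy1⟩, hy⟩
    have hsy : Summable fun k => a k * y ^ k :=
      hs.of_nonneg_of_le (fun k => mul_nonneg (ha k) (pow_nonneg hy0 k))
        fun k => mul_le_of_le_one_right (ha k) (pow_le_one₀ hy0 hy1)
    have hs1 : Summable fun k => a k * (1 : ℝ) ^ k := by simpa using hs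
    rw [slope_def_field, pgf, pgf, ← hsy.tsum_sub hs1, ← tsum_div_const]
    refine tsum_congr fun k => ?_
    rw [eq_div_iff (sub_ne_zero.2 hy), mul_assoc, geom_sum_mul]
    ring
  have hlim : ∀ k, Tendsto (g · k) (𝓝[Icc 0 1 \ {1}] 1) (𝓝 (k * a k)) := by
    intro k
    have hcont : Continuous (g · k) := by fun_prop
    simpa [g, mul_comm] using (hcont.tendsto 1).mono_left nhdsWithin_le_nhds
  have hbound : ∀ᶠ y in 𝓝[Icc 0 1 \ {1}] 1, ∀ k, ‖g y k‖ ≤ k * a k := by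
    filter_upwards [self_mem_nhdsWithin] with y ⟨⟨hy0, hy1⟩, _⟩ k
    have hgeom : ∑ i ∈ range k, y ^ i ≤ k := by
      simpa using Finset.sum_le_sum fun i (_ : i ∈ range k) => pow_le_one₀ hy0 hy1
    rw [Real.norm_eq_abs, abs_of_nonneg (mul_nonneg (ha k) (by positivity)), mul_comm (k : ℝ)]
    exact mul_le_mul_of_nonneg_left hgeom (ha k)
  exact (tendsto_tsum_of_dominated_convergence hm hlim hbound).congr'
    (eventually_nhdsWithin_of_forall hslope)

theorem derivWithin_pgf_pos (ha : ∀ k, 0 ≤ a k) (hs : Summable a)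
    (hm : Summable fun k : ℕ => (k : ℝ) * a k) (h1 : 0 < a 1) (hx : x ∈ Icc (0 : ℝ) 1) :
    0 < derivWithin (pgf a) (Icc 0 1) x := by
  rcases hx.2.eq_or_lt with rfl | hlt
  · rw [(hasDerivWithinAt_pgf_one ha hs hm).derivWithin (uniqueDiffOn_Icc one_pos 1 hx)]
    calc 0 < ((1 : ℕ) : ℝ) * a 1 := by simpa using h1
      _ ≤ ∑' k : ℕ, (k : ℝ) * a k := hm.le_tsum 1 fun k _ => mul_nonneg k.cast_nonneg (ha k)
  · have hB : ∀ k, |a k| ≤ (∑' k, a k) * (k + 0).choose 0 := fun k => by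
      rw [abs_of_nonneg (ha k), Nat.choose_zero_right, Nat.cast_one, mul_one]
      exact hs.le_tsum k fun j _ => ha j
    have hx' : |x| < 1 := abs_lt.2 ⟨by linarith [hx.1], hlt⟩
    rw [(hasDerivAt_pgf_of_abs_le_choose hB hx').hasDerivWithinAt.derivWithin
      (uniqueDiffOn_Icc one_pos x hx)]
    calc 0 < coeffDeriv a 0 * x ^ 0 := by simpa [coeffDeriv] using h1
      _ ≤ pgf (coeffDeriv a) x := le_hasSum (hasSum_pgf (abs_coeffDeriv_le hB) hx') 0 fun k _ =>
        mul_nonneg (mul_nonneg (by positivity) (ha _)) (pow_nonneg hx.1 k)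

end PowerSeries

section Kingman

variable {c : ℝ}

theorem natCast_mul_natCast_sub_one_nonneg (k : ℕ) : 0 ≤ (k : ℝ) * (k - 1) := by
  rcases k with _ | k
  · simp
  · push_cast
    simp only [add_sub_cancel_right]
    positivity

theorem exitRate_pos (hc : 0 < c) (k : ℕ) : 0 < exitRate c k := by
  unfold exitRate
  linarith [natCast_mul_natCast_sub_one_nonneg k]

theorem kingmanFactor_nonneg (hc : 0 < c) (l : ℕ) : 0 ≤ kingmanFactor c l :=
  div_nonneg (by linarith [natCast_mul_natCast_sub_one_nonneg l]) (exitRate_pos hc l).le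

theorem kingmanFactor_le_one (hc : 0 < c) (l : ℕ) : kingmanFactor c l ≤ 1 :=
  div_le_one_of_le₀ (by linarith) (exitRate_pos hc l).le

theorem kingmanFactor_pos (hc : 0 < c) {l : ℕ} (hl : 2 ≤ l) : 0 < kingmanFactor c l := by
  have : (2 : ℝ) ≤ l := by exact_mod_cast hl
  exact div_pos (by nlinarith) (exitRate_pos hc l)

theorem pK_natCast (c : ℝ) (j k : ℕ) :
    pK c j k = c / exitRate c k * ∏ l ∈ Icc (k + 1) j, kingmanFactor c l := by
  simp [pK, exitRate]

theorem pK_nonneg (hc : 0 < c) (j k : ℕ) : 0 ≤ pK c j k := by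
  rw [pK_natCast]
  exact mul_nonneg (div_nonneg hc.le (exitRate_pos hc k).le)
    (prod_nonneg fun l _ => kingmanFactor_nonneg hc l)

theorem pK_le_one (hc : 0 < c) (j k : ℕ) : pK c j k ≤ 1 := by
  rw [pK_natCast]
  refine mul_le_one₀ (div_le_one_of_le₀ ?_ (exitRate_pos hc k).le)
    (prod_nonneg fun l _ => kingmanFactor_nonneg hc l)
    (prod_le_one (fun l _ => kingmanFactor_nonneg hc l) fun l _ => kingmanFactor_le_one hc l)
  unfold exitRate
  linarith [natCast_mul_natCast_sub_one_nonneg k]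

theorem ite_pK_nonneg (hc : 0 < c) (j k : ℕ) : 0 ≤ if k ≤ j then pK c j k else 0 := by
  split_ifs
  exacts [pK_nonneg hc j k, le_rfl]

theorem ite_pK_le_one (hc : 0 < c) (j k : ℕ) : (if k ≤ j then pK c j k else 0) ≤ 1 := by
  split_ifs
  exacts [pK_le_one hc j k, zero_le_one]

theorem pK_one_pos (hc : 0 < c) (j : ℕ) : 0 < pK c j 1 := by
  rw [pK_natCast]
  exact mul_pos (div_pos hc (exitRate_pos hc 1))
    (prod_pos fun l hl => kingmanFactor_pos hc (mem_Icc.1 hl).1)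

theorem exitRate_mul_ite_pK (hc : 0 < c) (j k : ℕ) :
    exitRate c k * (if k ≤ j then pK c j k else 0)
      = (if j = k then c else 0)
        + (k + 1) * k / 2 * (if k + 1 ≤ j then pK c j (k + 1) else 0) := by
  have hcancel : ∀ y, exitRate c k * (c / exitRate c k * y) = c * y := fun y => by
    rw [← mul_assoc, mul_div_cancel₀ _ (exitRate_pos hc k).ne']
  rcases lt_trichotomy j k with hjk | rfl | hkj
  · simp [hjk.not_ge, hjk.ne, show ¬ k + 1 ≤ j by omega]
  · rw [if_pos le_rfl, if_pos rfl, if_neg (by omega), pK_natCast, Finset.Icc_eq_empty (by omega),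
      Finset.prod_empty, hcancel]
    ring
  · rw [if_pos hkj.le, if_neg hkj.ne', if_pos (show k + 1 ≤ j from hkj), pK_natCast, pK_natCast,
      ← Finset.insert_Icc_add_one_left_eq_Icc (show k + 1 ≤ j from hkj),
      Finset.prod_insert (by simp), hcancel, kingmanFactor, exitRate]
    push_cast
    ring

end Kingman

section Distributions

variable {c : ℝ} {μ ν : ℕ∞ → ℝ}

theorem conv_natCast (μ ν : ℕ∞ → ℝ) (n : ℕ) :
    conv μ ν n = ∑ p ∈ antidiagonal n, μ p.1 * ν p.2 := by
  have hinj : Function.Injective (Prod.map ((↑) : ℕ → ℕ∞) ((↑) : ℕ → ℕ∞)) :=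
    Nat.cast_injective.prodMap Nat.cast_injective
  rw [conv, ← hinj.tsum_eq, tsum_eq_sum (s := antidiagonal n)]
  · refine sum_congr rfl fun p hp => ?_
    simp [← HasAntidiagonal.mem_antidiagonal.1 hp]
  · intro p hp
    rw [HasAntidiagonal.mem_antidiagonal] at hp
    simp only [Prod.map_fst, Prod.map_snd, ← Nat.cast_add, Nat.cast_inj, if_neg hp]
  · rintro ⟨a, b⟩ hab
    have hsum : a + b = n := by
      by_contra h
      exact hab (if_neg h)
    obtain ⟨ha, hb⟩ := WithTop.add_ne_top.1 (hsum ▸ ENat.natCast_ne_top n)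
    lift a to ℕ using ha
    lift b to ℕ using hb
    exact ⟨(a, b), rfl⟩

theorem conv_top (hμ : μ ⊤ = 0) (hν : ν ⊤ = 0) : conv μ ν ⊤ = 0 := by
  refine (tsum_congr fun p => ?_).trans tsum_zero
  split_ifs with h
  · rcases ENat.add_eq_top.1 h with h | h <;> simp [h, hμ, hν]
  · rfl

theorem FcFin_eq_tsum (hμ : μ ⊤ = 0) (k : ℕ) :
    FcFin c μ k = ∑' j : ℕ, conv μ μ j * if k ≤ j then pK c j k else 0 := by
  rw [FcFin, ← Nat.cast_injective.tsum_eq]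
  · simp only [Nat.cast_le, mul_ite, mul_zero]
  · intro j hj
    lift j to ℕ using fun h => hj (by simp [h, conv_top hμ hμ])
    exact ⟨j, rfl⟩

theorem Fc_natCast {k : ℕ} (hk : k ≠ 0) : Fc c μ k = FcFin c μ k := by
  simp [Fc, hk]

end Distributions

namespace MemS1

variable {c : ℝ} {μ : ℕ∞ → ℝ}

theorem hasSum_natCast (hμ : MemS1 μ) : HasSum (fun n : ℕ => μ n) 1 := by
  refine (Nat.cast_injective.hasSum_iff fun j hj => ?_).2 hμ.1.2.2
  induction j using ENat.recTopCoe with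
  | top => exact hμ.2.1
  | coe n => exact absurd ⟨n, rfl⟩ hj

theorem hasSum_conv_natCast (hμ : MemS1 μ) : HasSum (fun n : ℕ => conv μ μ n) 1 := by
  have hnorm : Summable fun n : ℕ => ‖μ n‖ := by
    simpa [abs_of_nonneg (hμ.1.1 _)] using hμ.hasSum_natCast.summable
  have h := (summable_norm_sum_mul_antidiagonal_of_summable_norm hnorm hnorm).of_norm.hasSum
  rw [← tsum_mul_tsum_eq_tsum_sum_antidiagonal_of_summable_norm hnorm hnorm,
    hμ.hasSum_natCast.tsum_eq, one_mul] at h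
  simpa only [conv_natCast] using h

theorem conv_natCast_nonneg (hμ : MemS1 μ) (n : ℕ) : 0 ≤ conv μ μ n := by
  rw [conv_natCast]
  exact sum_nonneg fun p _ => mul_nonneg (hμ.1.1 _) (hμ.1.1 _)

theorem hasSum_pK_of_Fc_eq (hc : 0 < c) (hμ : MemS1 μ) (hfix : Fc c μ = μ) {k : ℕ}
    (hk : k ≠ 0) :
    HasSum (fun j : ℕ => conv μ μ j * if k ≤ j then pK c j k else 0) (μ k) := by
  have hsum : Summable fun j : ℕ => conv μ μ j * if k ≤ j then pK c j k else 0 := by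
    refine hμ.hasSum_conv_natCast.summable.of_nonneg_of_le
      (fun j => mul_nonneg (hμ.conv_natCast_nonneg j) (ite_pK_nonneg hc j k))
      fun j => mul_le_of_le_one_right (hμ.conv_natCast_nonneg j) (ite_pK_le_one hc j k)
  have hμk := congrFun hfix k
  rw [Fc_natCast hk, FcFin_eq_tsum hμ.2.1] at hμk
  exact hμk ▸ hsum.hasSum

theorem exitRate_mul_eq_of_Fc_eq (hc : 0 < c) (hμ : MemS1 μ) (hfix : Fc c μ = μ) (k : ℕ) :
    exitRate c k * μ k
      = c * ∑ p ∈ antidiagonal k, μ p.1 * μ p.2 + (k + 1) * k / 2 * μ (k + 1 : ℕ) := by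
  rcases eq_or_ne k 0 with rfl | hk
  · simp [hμ.1.2.1]
  have hterm : ∀ j : ℕ, exitRate c k * (conv μ μ j * if k ≤ j then pK c j k else 0)
      = (if j = k then c * conv μ μ k else 0)
        + (k + 1) * k / 2 * (conv μ μ j * if k + 1 ≤ j then pK c j (k + 1) else 0) := by
    intro j
    rw [mul_left_comm, exitRate_mul_ite_pK hc]
    rcases eq_or_ne j k with rfl | hjk
    · simp only [if_pos]
      ring
    · simp only [if_neg hjk]
      ring
  rw [← conv_natCast]
  refine ((hasSum_pK_of_Fc_eq hc hμ hfix hk).mul_left _).unique ?_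
  simpa only [hterm] using
    (hasSum_ite_eq k (c * conv μ μ k)).add
      ((hasSum_pK_of_Fc_eq hc hμ hfix k.succ_ne_zero).mul_left (((k : ℝ) + 1) * k / 2))

theorem apply_one_pos_of_Fc_eq (hc : 0 < c) (hμ : MemS1 μ) (hfix : Fc c μ = μ) :
    0 < μ (1 : ℕ) := by
  obtain ⟨i, hi⟩ : ∃ i : ℕ, 0 < μ i := by
    by_contra! h
    have hzero : (fun i : ℕ => μ i) = 0 := funext fun i => le_antisymm (h i) (hμ.1.1 _)
    have := hμ.hasSum_natCast
    rw [hzero] at this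
    exact one_ne_zero (hasSum_zero.unique this).symm
  have hi0 : i ≠ 0 := by
    rintro rfl
    simp [hμ.1.2.1] at hi
  have hconv : 0 < conv μ μ (i + i : ℕ) := by
    rw [conv_natCast]
    have hii : (i, i) ∈ antidiagonal (i + i) := HasAntidiagonal.mem_antidiagonal.2 rfl
    exact (mul_pos hi hi).trans_le (single_le_sum (f := fun p : ℕ × ℕ => μ p.1 * μ p.2)
      (fun p _ => mul_nonneg (hμ.1.1 _) (hμ.1.1 _)) hii)
  have h := le_hasSum (hasSum_pK_of_Fc_eq hc hμ hfix one_ne_zero) (i + i)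
    fun j _ => mul_nonneg (hμ.conv_natCast_nonneg j) (ite_pK_nonneg hc j 1)
  rw [if_pos (by omega)] at h
  exact (mul_pos hconv (pK_one_pos hc _)).trans_le h

end MemS1

/-- If `μ ∈ S₁` is a fixed point of `F_c` with probability generating
function `R`, then `R(0) = 0`, `R(1) = 1`, `R' > 0` on `[0,1]`, and
`R(x) = R(x)² + (x(1-x)/(2c)) R''(x)` on `[0,1)`. -/
theorem pgf_ode (c : ℝ) (hc : 0 < c) (μ : ℕ∞ → ℝ) (hμ : MemS1 μ) (hfix : Fc c μ = μ)
    (R : ℝ → ℝ) (hR : R = fun x => ∑' i : ℕ, μ (i : ℕ∞) * x ^ i) :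
    R 0 = 0 ∧ R 1 = 1 ∧
    (∀ x ∈ Set.Icc (0 : ℝ) 1, 0 < derivWithin R (Set.Icc (0 : ℝ) 1) x) ∧
    ∀ x ∈ Set.Ico (0 : ℝ) 1,
      R x = (R x) ^ 2 + x * (1 - x) / (2 * c) * deriv (deriv R) x := by
  have hR : R = pgf fun n : ℕ => μ n := hR
  subst hR
  have hq : HasSum (fun n : ℕ => μ n) 1 := hμ.hasSum_natCast
  have hq_abs : ∀ k : ℕ, |μ k| ≤ 1 * (k + 0).choose 0 := fun k => by
    simpa [abs_of_nonneg (hμ.1.1 k)] using le_hasSum hq k fun j _ => hμ.1.1 j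
  refine ⟨?_, ?_, fun x hx => ?_, fun x hx => ?_⟩
  · simpa [pgf_zero] using hμ.1.2.1
  · rw [pgf_one, hq.tsum_eq]
  · exact derivWithin_pgf_pos (fun k => hμ.1.1 k) hq.summable hμ.2.2
      (hμ.apply_one_pos_of_Fc_eq hc hfix) hx
  · exact pgf_eq_sq_add_deriv_deriv hc.ne' hq_abs (hμ.exitRate_mul_eq_of_Fc_eq hc hfix)
      (abs_lt.2 ⟨by linarith [hx.1], hx.2⟩)
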